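/- In the graph L consisting of two vertices a and a' joined by three internally disjoint paths each of length 3, any strong splitting stable set S of a graph G containing L as an induced subgraph satisfies S ∩ V(L) = ∅ or S ∩ V(L) = {a, a'}. -/
import Mathlib


/-- A stable (independent) set of vertices. -/
def SimpleGraph.IsStableSet {V : Type*} (G : SimpleGraph V) (A : Set V) : Prop :=
  ∀ ⦃u⦄, u ∈ A → ∀ ⦃v⦄, v ∈ A → ¬ G.Adj u v

/-- A splitting stable set: a stable set such that every vertex of `A` has at most one
neighbor in each connected component of `G \ A`. -/
def SimpleGraph.IsSplitting {V : Type*} (G : SimpleGraph V) (A : Set V) : Prop :=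
  G.IsStableSet A ∧ ∀ a ∈ A, ∀ u v : (Aᶜ : Set V),
    (G.induce (Aᶜ : Set V)).Reachable u v → G.Adj a ↑u → G.Adj a ↑v → u = v

/-- A strongly splitting stable set: additionally every vertex outside `S` has at most
one neighbor in `S`. -/
def SimpleGraph.IsStrongSplitting {V : Type*} (G : SimpleGraph V) (S : Set V) : Prop :=
  G.IsSplitting S ∧ ∀ v ∉ S, ∀ a ∈ S, ∀ b ∈ S, G.Adj v a → G.Adj v b → a = b

/-- A graph is Zykov-like if every nonempty induced subgraph contains a nonempty
splitting stable set. -/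
def SimpleGraph.ZykovLike {V : Type*} (G : SimpleGraph V) : Prop :=
  ∀ X : Set V, X.Nonempty → ∃ A : Set X, A.Nonempty ∧ (G.induce X).IsSplitting A

/-- A graph is Descartes-like if every nonempty induced subgraph contains a nonempty
strongly splitting stable set. -/
def SimpleGraph.DescartesLike {V : Type*} (G : SimpleGraph V) : Prop :=
  ∀ X : Set V, X.Nonempty → ∃ S : Set X, S.Nonempty ∧ (G.induce X).IsStrongSplitting S

/-- The edge set of the graph L, on vertices 0 = a, 1 = a', and three paths
0 - (2+i) - (5+i) - 1 for i = 0, 1, 2. -/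
def gadgetLEdges : Set (Sym2 (Fin 8)) :=
  {s(0, 2), s(2, 5), s(5, 1), s(0, 3), s(3, 6), s(6, 1), s(0, 4), s(4, 7), s(7, 1)}

lemma mem_gadgetL_iff (e : Sym2 (Fin 8)) :
    e ∈ gadgetLEdges ↔ (e = s(0,2) ∨ e = s(2,5) ∨ e = s(5,1) ∨ e = s(0,3) ∨ e = s(3,6)
      ∨ e = s(6,1) ∨ e = s(0,4) ∨ e = s(4,7) ∨ e = s(7,1)) := by
  simp [gadgetLEdges, Set.mem_insert_iff, Set.mem_singleton_iff]

lemma induceAdj {V : Type*} {G : SimpleGraph V} {t : Set V} {u v : V} (hu : u ∉ t) (hv : v ∉ t)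
    (h : G.Adj u v) : (G.induce (tᶜ : Set V)).Adj ⟨u, hu⟩ ⟨v, hv⟩ := h

section Key
variable {V : Type*} (G : SimpleGraph V) (f : Fin 8 → V)

/-- core lemma: f 2 ∉ S. -/
lemma gadget_key (hinj : Function.Injective f)
    (hadj : ∀ i j : Fin 8, G.Adj (f i) (f j) ↔ s(i, j) ∈ gadgetLEdges)
    (S : Set V) (hS : G.IsStrongSplitting S) : f 2 ∉ S := by
  intro h2
  have adj : ∀ i j : Fin 8, s(i,j) ∈ gadgetLEdges → G.Adj (f i) (f j) := fun i j h => (hadj i j).2 h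
  have e02 : G.Adj (f 0) (f 2) := adj 0 2 (by rw [mem_gadgetL_iff]; decide)
  have e25 : G.Adj (f 2) (f 5) := adj 2 5 (by rw [mem_gadgetL_iff]; decide)
  have e51 : G.Adj (f 5) (f 1) := adj 5 1 (by rw [mem_gadgetL_iff]; decide)
  have e03 : G.Adj (f 0) (f 3) := adj 0 3 (by rw [mem_gadgetL_iff]; decide)
  have e36 : G.Adj (f 3) (f 6) := adj 3 6 (by rw [mem_gadgetL_iff]; decide)
  have e61 : G.Adj (f 6) (f 1) := adj 6 1 (by rw [mem_gadgetL_iff]; decide)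
  have e04 : G.Adj (f 0) (f 4) := adj 0 4 (by rw [mem_gadgetL_iff]; decide)
  have e47 : G.Adj (f 4) (f 7) := adj 4 7 (by rw [mem_gadgetL_iff]; decide)
  have e71 : G.Adj (f 7) (f 1) := adj 7 1 (by rw [mem_gadgetL_iff]; decide)
  have hstab := hS.1.1
  have hstrong := hS.2
  have h0 : f 0 ∉ S := fun h => hstab h h2 e02
  have h5 : f 5 ∉ S := fun h => hstab h2 h e25
  have h1 : f 1 ∉ S := by
    intro h
    have := hstrong (f 5) h5 (f 2) h2 (f 1) h e25.symm e51
    exact absurd (hinj this) (by decide)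
  have h3 : f 3 ∉ S := by
    intro h
    have := hstrong (f 0) h0 (f 2) h2 (f 3) h e02 e03
    exact absurd (hinj this) (by decide)
  have h4 : f 4 ∉ S := by
    intro h
    have := hstrong (f 0) h0 (f 2) h2 (f 4) h e02 e04
    exact absurd (hinj this) (by decide)
  have h67 : f 6 ∉ S ∨ f 7 ∉ S := by
    by_contra hc
    push_neg at hc
    have := hstrong (f 1) h1 (f 6) hc.1 (f 7) hc.2 e61.symm e71.symm
    exact absurd (hinj this) (by decide)
  have key : (G.induce (Sᶜ : Set V)).Reachable ⟨f 0, h0⟩ ⟨f 5, h5⟩ → False := by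
    intro hr
    have := hS.1.2 (f 2) h2 ⟨f 0, h0⟩ ⟨f 5, h5⟩ hr e02.symm e25
    exact absurd (hinj (Subtype.ext_iff.1 this)) (by decide)
  rcases h67 with h6 | h7
  · exact key (((induceAdj h0 h3 e03).reachable.trans
      ((induceAdj h3 h6 e36).reachable.trans
      ((induceAdj h6 h1 e61).reachable.trans (induceAdj h1 h5 e51.symm).reachable))))
  · exact key (((induceAdj h0 h4 e04).reachable.trans
      ((induceAdj h4 h7 e47).reachable.trans
      ((induceAdj h7 h1 e71).reachable.trans (induceAdj h1 h5 e51.symm).reachable))))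

/-- if f 0 ∈ S and all middle vertices are outside S, then f 1 ∈ S. -/
lemma gadget_key01 (hinj : Function.Injective f)
    (hadj : ∀ i j : Fin 8, G.Adj (f i) (f j) ↔ s(i, j) ∈ gadgetLEdges)
    (S : Set V) (hS : G.IsStrongSplitting S)
    (h2 : f 2 ∉ S) (h3 : f 3 ∉ S) (h5 : f 5 ∉ S) (h6 : f 6 ∉ S)
    (h0 : f 0 ∈ S) : f 1 ∈ S := by
  by_contra h1
  have adj : ∀ i j : Fin 8, s(i,j) ∈ gadgetLEdges → G.Adj (f i) (f j) := fun i j h => (hadj i j).2 h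
  have e02 : G.Adj (f 0) (f 2) := adj 0 2 (by rw [mem_gadgetL_iff]; decide)
  have e25 : G.Adj (f 2) (f 5) := adj 2 5 (by rw [mem_gadgetL_iff]; decide)
  have e51 : G.Adj (f 5) (f 1) := adj 5 1 (by rw [mem_gadgetL_iff]; decide)
  have e03 : G.Adj (f 0) (f 3) := adj 0 3 (by rw [mem_gadgetL_iff]; decide)
  have e36 : G.Adj (f 3) (f 6) := adj 3 6 (by rw [mem_gadgetL_iff]; decide)
  have e61 : G.Adj (f 6) (f 1) := adj 6 1 (by rw [mem_gadgetL_iff]; decide)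
  have hr : (G.induce (Sᶜ : Set V)).Reachable ⟨f 2, h2⟩ ⟨f 3, h3⟩ :=
    (induceAdj h2 h5 e25).reachable.trans
      ((induceAdj h5 h1 e51).reachable.trans
      ((induceAdj h1 h6 e61.symm).reachable.trans (induceAdj h6 h3 e36.symm).reachable))
  have := hS.1.2 (f 0) h0 ⟨f 2, h2⟩ ⟨f 3, h3⟩ hr e02 e03
  exact absurd (hinj (Subtype.ext_iff.1 this)) (by decide)

end Key


/-- if G contains L as an induced subgraph (via the injective map f,
inducing exactly the edges of L), then every strong splitting stable set S of G satisfies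
S ∩ V(L) = ∅ or S ∩ V(L) = {a, a'}. -/
theorem strongSplitting_inter_gadgetL {V : Type*} (G : SimpleGraph V) (f : Fin 8 → V)
    (hinj : Function.Injective f)
    (hadj : ∀ i j : Fin 8, G.Adj (f i) (f j) ↔ s(i, j) ∈ gadgetLEdges)
    (S : Set V) (hS : G.IsStrongSplitting S) :
    S ∩ Set.range f = ∅ ∨ S ∩ Set.range f = {f 0, f 1} := by
  -- permutations of L
  have mk : ∀ σ : Fin 8 → Fin 8, Function.Injective σ →
      (∀ i j : Fin 8, s(σ i, σ j) ∈ gadgetLEdges ↔ s(i,j) ∈ gadgetLEdges) →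
      Function.Injective (f ∘ σ) ∧
        (∀ i j : Fin 8, G.Adj ((f ∘ σ) i) ((f ∘ σ) j) ↔ s(i, j) ∈ gadgetLEdges) :=
    fun σ hσi hσe => ⟨hinj.comp hσi, fun i j => (hadj _ _).trans (hσe i j)⟩
  have eσ : ∀ σ : Fin 8 → Fin 8,
      (∀ i j : Fin 8, (s(σ i, σ j) = s(0,2) ∨ s(σ i, σ j) = s(2,5) ∨ s(σ i, σ j) = s(5,1) ∨
        s(σ i, σ j) = s(0,3) ∨ s(σ i, σ j) = s(3,6) ∨ s(σ i, σ j) = s(6,1) ∨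
        s(σ i, σ j) = s(0,4) ∨ s(σ i, σ j) = s(4,7) ∨ s(σ i, σ j) = s(7,1)) ↔
        (s(i,j) = s(0,2) ∨ s(i,j) = s(2,5) ∨ s(i,j) = s(5,1) ∨ s(i,j) = s(0,3) ∨
        s(i,j) = s(3,6) ∨ s(i,j) = s(6,1) ∨ s(i,j) = s(0,4) ∨ s(i,j) = s(4,7) ∨
        s(i,j) = s(7,1))) →
      ∀ i j : Fin 8, s(σ i, σ j) ∈ gadgetLEdges ↔ s(i,j) ∈ gadgetLEdges := by
    intro σ h i j
    rw [mem_gadgetL_iff, mem_gadgetL_iff]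
    exact h i j
  obtain ⟨i3, a3⟩ := mk ![0,1,3,2,4,6,5,7] (by decide) (eσ _ (by decide))
  obtain ⟨i4, a4⟩ := mk ![0,1,4,3,2,7,6,5] (by decide) (eσ _ (by decide))
  obtain ⟨iτ, aτ⟩ := mk ![1,0,5,6,7,2,3,4] (by decide) (eσ _ (by decide))
  obtain ⟨i5, a5⟩ := mk ![1,0,6,5,7,3,2,4] (by decide) (eσ _ (by decide))
  obtain ⟨i6, a6⟩ := mk ![1,0,7,6,5,4,3,2] (by decide) (eσ _ (by decide))
  have h2 : f 2 ∉ S := gadget_key G f hinj hadj S hS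
  have h3 : f 3 ∉ S := gadget_key G _ i3 a3 S hS
  have h4 : f 4 ∉ S := gadget_key G _ i4 a4 S hS
  have h5 : f 5 ∉ S := gadget_key G _ iτ aτ S hS
  have h6 : f 6 ∉ S := gadget_key G _ i5 a5 S hS
  have h7 : f 7 ∉ S := gadget_key G _ i6 a6 S hS
  by_cases h0 : f 0 ∈ S
  · have h1 : f 1 ∈ S := gadget_key01 G f hinj hadj S hS h2 h3 h5 h6 h0
    right
    ext x
    simp only [Set.mem_inter_iff, Set.mem_range, Set.mem_insert_iff, Set.mem_singleton_iff]
    constructor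
    · rintro ⟨hxS, i, rfl⟩
      fin_cases i
      · exact Or.inl rfl
      · exact Or.inr rfl
      · exact absurd hxS h2
      · exact absurd hxS h3
      · exact absurd hxS h4
      · exact absurd hxS h5
      · exact absurd hxS h6
      · exact absurd hxS h7
    · rintro (rfl | rfl)
      · exact ⟨h0, 0, rfl⟩
      · exact ⟨h1, 1, rfl⟩
  · have h1 : f 1 ∉ S := fun h1 => h0 (gadget_key01 G _ iτ aτ S hS h5 h6 h2 h3 h1)
    left
    ext x
    simp only [Set.mem_inter_iff, Set.mem_range, Set.mem_empty_iff_false, iff_false]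
    rintro ⟨hxS, i, rfl⟩
    fin_cases i
    · exact h0 hxS
    · exact h1 hxS
    · exact h2 hxS
    · exact h3 hxS
    · exact h4 hxS
    · exact h5 hxS
    · exact h6 hxS
    · exact h7 hxS
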